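/- Let ω > 0 and 0 < c₂ < 1, and set S_η = [[0, ω],[−ω, 0]] and γ_η = [1, 0]. Then there exist a unique twice continuously differentiable g₁ : [0,1] → ℝ^{1×2} and a unique continuously differentiable g₂ : [0,1] → ℝ^{1×2} satisfying: g₁''(x) = g₁(x)·S_η² for x ∈ [0,1], g₁'(0) = 0, g₁(1) = −γ_η − g₂(1), g₂'(x) = −g₂(x)·S_η for x ∈ [0,1], and g₂(0) = −c₂·g₁(0). -/

import Mathlib

/- STATEMENT 7: existence and uniqueness of the observer kernels g₁ (C²) and g₂ (C¹)
on [0,1] solving g₁'' = g₁ S_η², g₁'(0) = 0, g₁(1) = −γ_η − g₂(1),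
g₂' = −g₂ S_η, g₂(0) = −c₂ g₁(0), where S_η = [[0, ω],[−ω, 0]], γ_η = [1, 0],
ω > 0 and 0 < c₂ < 1. Derivatives are taken within [0,1], entrywise. -/

attribute [local instance] Matrix.normedAddCommGroup Matrix.normedSpace

open Set Matrix

/-- the observer-kernel boundary value problem for the pair `(g₁, g₂)`. -/
def IsObserverKernelPair (ω c₂ : ℝ)
    (g₁ g₂ : ℝ → Matrix (Fin 1) (Fin 2) ℝ) : Prop :=
  ContDiffOn ℝ 2 g₁ (Icc 0 1) ∧
  ContDiffOn ℝ 1 g₂ (Icc 0 1) ∧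
  (∀ x ∈ Icc (0:ℝ) 1,
    derivWithin (derivWithin g₁ (Icc 0 1)) (Icc 0 1) x = g₁ x * (!![0, ω; -ω, 0]) ^ 2) ∧
  derivWithin g₁ (Icc 0 1) 0 = 0 ∧
  g₁ 1 = -(!![1, 0] : Matrix (Fin 1) (Fin 2) ℝ) - g₂ 1 ∧
  (∀ x ∈ Icc (0:ℝ) 1,
    derivWithin g₂ (Icc 0 1) x = -(g₂ x * (!![0, ω; -ω, 0]))) ∧
  g₂ 0 = (-c₂) • g₁ 0

namespace ObsAux

noncomputable section

abbrev Sm (ω : ℝ) : Matrix (Fin 2) (Fin 2) ℝ := !![0, ω; -ω, 0]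

lemma S_sq (ω : ℝ) : (Sm ω) ^ 2 = (-(ω^2)) • (1 : Matrix (Fin 2) (Fin 2) ℝ) := by
  ext i j
  fin_cases i <;> fin_cases j <;>
    simp [pow_two, Matrix.mul_apply, Fin.sum_univ_two, Matrix.one_apply] <;> ring

lemma mulS2 (ω : ℝ) (A : Matrix (Fin 1) (Fin 2) ℝ) :
    A * (Sm ω) ^ 2 = (-(ω^2)) • A := by
  rw [S_sq, Matrix.mul_smul, Matrix.mul_one]

lemma mulSS (ω : ℝ) (A : Matrix (Fin 1) (Fin 2) ℝ) :
    (A * Sm ω) * Sm ω = (-(ω^2)) • A := by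
  rw [Matrix.mul_assoc, ← pow_two, mulS2]

def mulSL (ω : ℝ) : Matrix (Fin 1) (Fin 2) ℝ →L[ℝ] Matrix (Fin 1) (Fin 2) ℝ :=
  LinearMap.toContinuousLinearMap
    { toFun := fun A => A * Sm ω
      map_add' := fun A B => Matrix.add_mul A B _
      map_smul' := fun c A => by simp [Matrix.smul_mul] }

lemma hd_mulS {ω : ℝ} {f : ℝ → Matrix (Fin 1) (Fin 2) ℝ} {f' : Matrix (Fin 1) (Fin 2) ℝ}
    {s : Set ℝ} {x : ℝ} (h : HasDerivWithinAt f f' s x) :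
    HasDerivWithinAt (fun y => f y * Sm ω) (f' * Sm ω) s x :=
  (mulSL ω).hasFDerivAt.comp_hasDerivWithinAt x h

lemma hd_cos (ω x : ℝ) : HasDerivAt (fun y => Real.cos (ω*y)) (-Real.sin (ω*x) * ω) x :=
  (Real.hasDerivAt_cos (ω*x)).comp x (by simpa using (hasDerivAt_id x).const_mul ω)

lemma hd_sin (ω x : ℝ) : HasDerivAt (fun y => Real.sin (ω*y)) (Real.cos (ω*x) * ω) x :=
  (Real.hasDerivAt_sin (ω*x)).comp x (by simpa using (hasDerivAt_id x).const_mul ω)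

/-- solutions of `f'' = -ω² f`, `f' 0 = 0` within `Icc 0 1` are `cos (ω x) • f 0`. -/
lemma ode_second {ω : ℝ} (hω : 0 < ω) {f : ℝ → Matrix (Fin 1) (Fin 2) ℝ}
    (hf : ContDiffOn ℝ 2 f (Icc 0 1))
    (hf'' : ∀ x ∈ Icc (0:ℝ) 1,
      derivWithin (derivWithin f (Icc 0 1)) (Icc 0 1) x = (-(ω^2)) • f x)
    (hf'0 : derivWithin f (Icc 0 1) 0 = 0) :
    ∀ x ∈ Icc (0:ℝ) 1, f x = Real.cos (ω*x) • f 0 := by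
  have hω' : ω ≠ 0 := ne_of_gt hω
  have hs : UniqueDiffOn ℝ (Icc (0:ℝ) 1) := uniqueDiffOn_Icc one_pos
  set f' := derivWithin f (Icc (0:ℝ) 1) with hf'def
  have hfd : DifferentiableOn ℝ f (Icc (0:ℝ) 1) := hf.differentiableOn (by norm_num)
  have hf'd : DifferentiableOn ℝ f' (Icc (0:ℝ) 1) :=
    (hf.derivWithin (m := 1) hs (by norm_num)).differentiableOn (by norm_num)
  have Hf : ∀ x ∈ Icc (0:ℝ) 1, HasDerivWithinAt f (f' x) (Icc 0 1) x :=
    fun x hx => (hfd x hx).hasDerivWithinAt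
  have Hf' : ∀ x ∈ Icc (0:ℝ) 1, HasDerivWithinAt f' ((-(ω^2)) • f x) (Icc 0 1) x := by
    intro x hx
    have := (hf'd x hx).hasDerivWithinAt
    exact this.congr_deriv (hf'' x hx)
  set z : ℝ → Matrix (Fin 1) (Fin 2) ℝ :=
    fun x => Real.cos (ω*x) • f x - (Real.sin (ω*x)/ω) • f' x with hz_def
  set y : ℝ → Matrix (Fin 1) (Fin 2) ℝ :=
    fun x => Real.sin (ω*x) • f x + (Real.cos (ω*x)/ω) • f' x with hy_def
  have hz : ∀ x ∈ Icc (0:ℝ) 1, HasDerivWithinAt z 0 (Icc 0 1) x := by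
    intro x hx
    have h1 := (hd_cos ω x).hasDerivWithinAt.smul (Hf x hx)
    have h2 := ((hd_sin ω x).div_const ω).hasDerivWithinAt.smul (Hf' x hx)
    have := h1.sub h2
    refine this.congr_deriv ?_
    match_scalars <;> (field_simp; try ring)
  have hy : ∀ x ∈ Icc (0:ℝ) 1, HasDerivWithinAt y 0 (Icc 0 1) x := by
    intro x hx
    have h1 := (hd_sin ω x).hasDerivWithinAt.smul (Hf x hx)
    have h2 := ((hd_cos ω x).div_const ω).hasDerivWithinAt.smul (Hf' x hx)
    have := h1.add h2
    refine this.congr_deriv ?_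
    match_scalars <;> (field_simp; try ring)
  have hzc : ∀ x ∈ Icc (0:ℝ) 1, z x = z 0 :=
    constant_of_derivWithin_zero (fun x hx => (hz x hx).differentiableWithinAt)
      (fun x hx => (hz x (Ico_subset_Icc_self hx)).derivWithin (hs x (Ico_subset_Icc_self hx)))
  have hyc : ∀ x ∈ Icc (0:ℝ) 1, y x = y 0 :=
    constant_of_derivWithin_zero (fun x hx => (hy x hx).differentiableWithinAt)
      (fun x hx => (hy x (Ico_subset_Icc_self hx)).derivWithin (hs x (Ico_subset_Icc_self hx)))
  have hz0 : z 0 = f 0 := by simp [hz_def]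
  have hy0 : y 0 = 0 := by simp [hy_def, ← hf'def, hf'0]
  intro x hx
  have key : Real.cos (ω*x) • z x + Real.sin (ω*x) • y x = f x := by
    simp only [hz_def, hy_def]
    match_scalars
    · field_simp
      try ring
      linear_combination Real.sin_sq_add_cos_sq (ω*x)
    · field_simp
      try ring
  rw [hzc x hx, hyc x hx, hz0, hy0, smul_zero, add_zero] at key
  exact key.symm

/-- solutions of `f' = -(f S)` within `Icc 0 1`. -/
lemma ode_first {ω : ℝ} (hω : 0 < ω) {f : ℝ → Matrix (Fin 1) (Fin 2) ℝ}
    (hf : ContDiffOn ℝ 1 f (Icc 0 1))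
    (hf' : ∀ x ∈ Icc (0:ℝ) 1, derivWithin f (Icc 0 1) x = -(f x * Sm ω)) :
    ∀ x ∈ Icc (0:ℝ) 1,
      f x = Real.cos (ω*x) • f 0 - (Real.sin (ω*x)/ω) • (f 0 * Sm ω) := by
  have hω' : ω ≠ 0 := ne_of_gt hω
  have hs : UniqueDiffOn ℝ (Icc (0:ℝ) 1) := uniqueDiffOn_Icc one_pos
  have hfd : DifferentiableOn ℝ f (Icc (0:ℝ) 1) := hf.differentiableOn one_ne_zero
  have Hf : ∀ x ∈ Icc (0:ℝ) 1, HasDerivWithinAt f (-(f x * Sm ω)) (Icc 0 1) x := by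
    intro x hx
    have := (hfd x hx).hasDerivWithinAt
    exact this.congr_deriv (hf' x hx)
  have HfS : ∀ x ∈ Icc (0:ℝ) 1,
      HasDerivWithinAt (fun y => f y * Sm ω) ((ω^2) • f x) (Icc 0 1) x := by
    intro x hx
    have := hd_mulS (ω := ω) (Hf x hx)
    rw [Matrix.neg_mul, mulSS] at this
    convert this using 1
    module
  set p : ℝ → Matrix (Fin 1) (Fin 2) ℝ :=
    fun x => Real.cos (ω*x) • f x + (Real.sin (ω*x)/ω) • (f x * Sm ω) with hp_def
  set q : ℝ → Matrix (Fin 1) (Fin 2) ℝ :=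
    fun x => (Real.cos (ω*x)/ω) • (f x * Sm ω) - Real.sin (ω*x) • f x with hq_def
  have hp : ∀ x ∈ Icc (0:ℝ) 1, HasDerivWithinAt p 0 (Icc 0 1) x := by
    intro x hx
    have h1 := (hd_cos ω x).hasDerivWithinAt.smul (Hf x hx)
    have h2 := ((hd_sin ω x).div_const ω).hasDerivWithinAt.smul (HfS x hx)
    have := h1.add h2
    refine this.congr_deriv ?_
    match_scalars <;> (field_simp; try ring)
  have hq : ∀ x ∈ Icc (0:ℝ) 1, HasDerivWithinAt q 0 (Icc 0 1) x := by
    intro x hx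
    have h1 := ((hd_cos ω x).div_const ω).hasDerivWithinAt.smul (HfS x hx)
    have h2 := (hd_sin ω x).hasDerivWithinAt.smul (Hf x hx)
    have := h1.sub h2
    refine this.congr_deriv ?_
    match_scalars <;> (field_simp; try ring)
  have hpc : ∀ x ∈ Icc (0:ℝ) 1, p x = p 0 :=
    constant_of_derivWithin_zero (fun x hx => (hp x hx).differentiableWithinAt)
      (fun x hx => (hp x (Ico_subset_Icc_self hx)).derivWithin (hs x (Ico_subset_Icc_self hx)))
  have hqc : ∀ x ∈ Icc (0:ℝ) 1, q x = q 0 :=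
    constant_of_derivWithin_zero (fun x hx => (hq x hx).differentiableWithinAt)
      (fun x hx => (hq x (Ico_subset_Icc_self hx)).derivWithin (hs x (Ico_subset_Icc_self hx)))
  have hp0 : p 0 = f 0 := by simp [hp_def]
  have hq0 : q 0 = (1/ω) • (f 0 * Sm ω) := by simp [hq_def]
  intro x hx
  have key : Real.cos (ω*x) • p x - Real.sin (ω*x) • q x = f x := by
    simp only [hp_def, hq_def]
    match_scalars
    · field_simp
      try ring
      linear_combination Real.sin_sq_add_cos_sq (ω*x)
    · field_simp
      try ring
  rw [hpc x hx, hqc x hx, hp0, hq0] at key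
  rw [← key]
  match_scalars <;> (field_simp; try ring)

/-- the boundary matrix. -/
def Mb (ω c₂ : ℝ) : Matrix (Fin 2) (Fin 2) ℝ :=
  ((1 - c₂) * Real.cos ω) • (1 : Matrix (Fin 2) (Fin 2) ℝ) +
    (c₂ * Real.sin ω / ω) • Sm ω

lemma Mb_det_ne_zero {ω c₂ : ℝ} (hω : 0 < ω) (hc₂ : c₂ ∈ Ioo (0:ℝ) 1) :
    (Mb ω c₂).det ≠ 0 := by
  have hω' : ω ≠ 0 := ne_of_gt hω
  have hdet : (Mb ω c₂).det = ((1 - c₂) * Real.cos ω)^2 + (c₂ * Real.sin ω)^2 := by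
    simp [Mb, Matrix.det_fin_two, Matrix.one_apply]
    field_simp
  rw [hdet]
  have h1 : (0:ℝ) < (1 - c₂)^2 := by nlinarith [hc₂.2]
  have h2 : (0:ℝ) < c₂^2 := by nlinarith [hc₂.1]
  have h3 := Real.sin_sq_add_cos_sq ω
  nlinarith [sq_nonneg (Real.cos ω), sq_nonneg (Real.sin ω),
    mul_nonneg (le_of_lt h1) (sq_nonneg (Real.cos ω)),
    mul_nonneg (le_of_lt h2) (sq_nonneg (Real.sin ω)),
    mul_pos h1 h2]

lemma eq_of_mul_Mb {ω c₂ : ℝ} (hω : 0 < ω) (hc₂ : c₂ ∈ Ioo (0:ℝ) 1)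
    {X Y : Matrix (Fin 1) (Fin 2) ℝ}
    (hX : X * Mb ω c₂ = Y) : X = Y * (Mb ω c₂)⁻¹ := by
  have h := Mb_det_ne_zero hω hc₂
  have : X * (Mb ω c₂ * (Mb ω c₂)⁻¹) = Y * (Mb ω c₂)⁻¹ := by
    rw [← Matrix.mul_assoc, hX]
  rwa [Matrix.mul_nonsing_inv _ (isUnit_iff_ne_zero.mpr h), Matrix.mul_one] at this

/-- characterization of solutions. -/
lemma char {ω c₂ : ℝ} (hω : 0 < ω) (hc₂ : c₂ ∈ Ioo (0:ℝ) 1)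
    {g₁ g₂ : ℝ → Matrix (Fin 1) (Fin 2) ℝ} (h : IsObserverKernelPair ω c₂ g₁ g₂) :
    (∀ x ∈ Icc (0:ℝ) 1, g₁ x = Real.cos (ω*x) • g₁ 0) ∧
    (∀ x ∈ Icc (0:ℝ) 1, g₂ x =
      Real.cos (ω*x) • ((-c₂) • g₁ 0) - (Real.sin (ω*x)/ω) • (((-c₂) • g₁ 0) * Sm ω)) ∧
    g₁ 0 = (-(!![1, 0] : Matrix (Fin 1) (Fin 2) ℝ)) * (Mb ω c₂)⁻¹ := by
  obtain ⟨h1, h2, h3, h4, h5, h6, h7⟩ := h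
  have hω' : ω ≠ 0 := ne_of_gt hω
  have hg1 : ∀ x ∈ Icc (0:ℝ) 1, g₁ x = Real.cos (ω*x) • g₁ 0 := by
    refine ode_second hω h1 ?_ h4
    intro x hx
    rw [h3 x hx, mulS2]
  have hg2 : ∀ x ∈ Icc (0:ℝ) 1, g₂ x =
      Real.cos (ω*x) • g₂ 0 - (Real.sin (ω*x)/ω) • (g₂ 0 * Sm ω) :=
    ode_first hω h2 h6
  have hg2' : ∀ x ∈ Icc (0:ℝ) 1, g₂ x =
      Real.cos (ω*x) • ((-c₂) • g₁ 0) - (Real.sin (ω*x)/ω) • (((-c₂) • g₁ 0) * Sm ω) := by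
    intro x hx
    rw [hg2 x hx, h7]
  refine ⟨hg1, hg2', ?_⟩
  refine eq_of_mul_Mb hω hc₂ ?_
  have e1 := hg1 1 (by norm_num)
  have e2 := hg2' 1 (by norm_num)
  rw [mul_one] at e1 e2
  rw [e1, e2, Matrix.smul_mul] at h5
  have expand : g₁ 0 * Mb ω c₂ =
      ((1 - c₂) * Real.cos ω) • g₁ 0 + (c₂ * Real.sin ω / ω) • (g₁ 0 * Sm ω) := by
    rw [Mb, Matrix.mul_add, Matrix.mul_smul, Matrix.mul_smul, Matrix.mul_one]
  rw [expand, ← eq_sub_iff_add_eq.mp h5]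
  match_scalars <;> (field_simp; try ring)

end

end ObsAux

open ObsAux in
theorem observer_kernel_existence_uniqueness (ω c₂ : ℝ)
    (hω : 0 < ω) (hc₂ : c₂ ∈ Ioo (0:ℝ) 1) :
    (∃ g₁ g₂ : ℝ → Matrix (Fin 1) (Fin 2) ℝ, IsObserverKernelPair ω c₂ g₁ g₂) ∧
    (∀ g₁ g₂ g₁' g₂' : ℝ → Matrix (Fin 1) (Fin 2) ℝ,
      IsObserverKernelPair ω c₂ g₁ g₂ → IsObserverKernelPair ω c₂ g₁' g₂' →
      EqOn g₁ g₁' (Icc 0 1) ∧ EqOn g₂ g₂' (Icc 0 1)) := by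
  have hω' : ω ≠ 0 := ne_of_gt hω
  have hs : UniqueDiffOn ℝ (Icc (0:ℝ) 1) := uniqueDiffOn_Icc one_pos
  constructor
  · -- existence
    obtain ⟨A, hAM⟩ : ∃ A : Matrix (Fin 1) (Fin 2) ℝ,
        A * Mb ω c₂ = -(!![1, 0] : Matrix (Fin 1) (Fin 2) ℝ) :=
      ⟨(-(!![1, 0] : Matrix (Fin 1) (Fin 2) ℝ)) * (Mb ω c₂)⁻¹, by
        rw [Matrix.mul_assoc,
          Matrix.nonsing_inv_mul _ (isUnit_iff_ne_zero.mpr (Mb_det_ne_zero hω hc₂)),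
          Matrix.mul_one]⟩
    obtain ⟨B, hB⟩ : ∃ B : Matrix (Fin 1) (Fin 2) ℝ, B = (-c₂) • A := ⟨_, rfl⟩
    have expand : A * Mb ω c₂ =
        ((1 - c₂) * Real.cos ω) • A + (c₂ * Real.sin ω / ω) • (A * Sm ω) := by
      rw [Mb, Matrix.mul_add, Matrix.mul_smul, Matrix.mul_smul, Matrix.mul_one]
    refine ⟨fun x => Real.cos (ω*x) • A,
      fun x => Real.cos (ω*x) • B - (Real.sin (ω*x)/ω) • (B * Sm ω), ?_, ?_, ?_, ?_, ?_, ?_, ?_⟩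
    · exact ((Real.contDiff_cos.comp (contDiff_const.mul contDiff_id)).smul
        contDiff_const).contDiffOn
    · exact (((Real.contDiff_cos.comp (contDiff_const.mul contDiff_id)).smul
        contDiff_const).sub
        (((Real.contDiff_sin.comp (contDiff_const.mul contDiff_id)).div_const ω).smul
        contDiff_const)).contDiffOn
    · intro x hx
      have hd1 : ∀ t ∈ Icc (0:ℝ) 1,
          derivWithin (fun y => Real.cos (ω*y) • A) (Icc 0 1) t
            = (-Real.sin (ω*t) * ω) • A := fun t ht =>
        (((hd_cos ω t).smul_const A).hasDerivWithinAt).derivWithin (hs t ht)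
      rw [show derivWithin (derivWithin (fun y => Real.cos (ω*y) • A) (Icc 0 1)) (Icc 0 1) x = derivWithin (fun t => (-Real.sin (ω*t) * ω) • A) (Icc 0 1) x from derivWithin_congr hd1 (hd1 x hx)]
      have hd2 : derivWithin (fun t => (-Real.sin (ω*t) * ω) • A) (Icc 0 1) x
          = (-(Real.cos (ω*x) * ω) * ω) • A :=
        ((((hd_sin ω x).neg.mul_const ω).smul_const A).hasDerivWithinAt).derivWithin (hs x hx)
      rw [hd2]
      show _ = (Real.cos (ω*x) • A) * (!![0, ω; -ω, 0]) ^ 2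
      rw [Matrix.smul_mul, mulS2]
      match_scalars; ring
    · have hd1 : derivWithin (fun y => Real.cos (ω*y) • A) (Icc 0 1) 0
          = (-Real.sin (ω*0) * ω) • A :=
        (((hd_cos ω 0).smul_const A).hasDerivWithinAt).derivWithin (hs 0 (by norm_num))
      rw [hd1]; simp
    · show Real.cos (ω*1) • A = -(!![1, 0] : Matrix (Fin 1) (Fin 2) ℝ) -
        (Real.cos (ω*1) • B - (Real.sin (ω*1)/ω) • (B * Sm ω))
      rw [mul_one, ← hAM, expand, hB, Matrix.smul_mul]
      match_scalars <;> (field_simp; try ring)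
    · intro x hx
      have hd1 : derivWithin
          (fun y => Real.cos (ω*y) • B - (Real.sin (ω*y)/ω) • (B * Sm ω)) (Icc 0 1) x
          = (-Real.sin (ω*x) * ω) • B - (Real.cos (ω*x) * ω / ω) • (B * Sm ω) :=
        ((((hd_cos ω x).smul_const B).sub
          (((hd_sin ω x).div_const ω).smul_const (B * Sm ω))).hasDerivWithinAt).derivWithin
          (hs x hx)
      show _ = -((Real.cos (ω*x) • B - (Real.sin (ω*x)/ω) • (B * Sm ω)) * (!![0, ω; -ω, 0]))
      rw [hd1, Matrix.sub_mul, Matrix.smul_mul, Matrix.smul_mul, mulSS]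
      match_scalars <;> (field_simp; try ring)
    · simp [hB]
  · -- uniqueness
    intro g₁ g₂ g₁' g₂' h h'
    obtain ⟨c1, c2, c3⟩ := char hω hc₂ h
    obtain ⟨c1', c2', c3'⟩ := char hω hc₂ h'
    have hA : g₁ 0 = g₁' 0 := by rw [c3, c3']
    constructor
    · intro x hx
      rw [c1 x hx, c1' x hx, hA]
    · intro x hx
      rw [c2 x hx, c2' x hx, hA]
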